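/- Let f : ℝ^d → ℝ be differentiable, let β, γ : (0, ∞) → ℝ be continuously differentiable, and let X : (0, ∞) → ℝ^d be twice continuously differentiable with Ẍ_t + γ̇_t Ẋ_t + e^{β_t} ∇f(X_t) = 0 for all t > 0. Let τ : (0, ∞) → (0, ∞) be twice continuously differentiable and strictly increasing with τ̇(t) > 0, and define Y_t = X_{τ(t)}, β^{(τ)}_t = β_{τ(t)} + 2 log τ̇(t), and γ^{(τ)}_t = γ_{τ(t)} − log τ̇(t). Then Ÿ_t + (d/dt γ^{(τ)}_t) Ẏ_t + e^{β^{(τ)}_t} ∇f(Y_t) = 0 for all t > 0. -/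
import Mathlib


open scoped RealInnerProductSpace
open Real Set

noncomputable section

theorem bregman_flow_time_dilation
    (d : ℕ) (f : EuclideanSpace ℝ (Fin d) → ℝ) (hf : Differentiable ℝ f)
    (β γ β' γ' : ℝ → ℝ)
    (hβ : ∀ t ∈ Set.Ioi (0 : ℝ), HasDerivAt β (β' t) t)
    (hγ : ∀ t ∈ Set.Ioi (0 : ℝ), HasDerivAt γ (γ' t) t)
    (X X' X'' : ℝ → EuclideanSpace ℝ (Fin d))
    (hX : ∀ t ∈ Set.Ioi (0 : ℝ), HasDerivAt X (X' t) t)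
    (hX' : ∀ t ∈ Set.Ioi (0 : ℝ), HasDerivAt X' (X'' t) t)
    (heq : ∀ t ∈ Set.Ioi (0 : ℝ),
      X'' t + γ' t • X' t + Real.exp (β t) • gradient f (X t) = 0)
    (τ τ' τ'' : ℝ → ℝ)
    (hτpos : ∀ t ∈ Set.Ioi (0 : ℝ), 0 < τ t)
    (hτmono : StrictMonoOn τ (Set.Ioi 0))
    (hτ : ∀ t ∈ Set.Ioi (0 : ℝ), HasDerivAt τ (τ' t) t)
    (hτ' : ∀ t ∈ Set.Ioi (0 : ℝ), HasDerivAt τ' (τ'' t) t)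
    (hτ'pos : ∀ t ∈ Set.Ioi (0 : ℝ), 0 < τ' t) :
    ∀ t ∈ Set.Ioi (0 : ℝ),
      deriv (deriv (fun s : ℝ => X (τ s))) t +
        (deriv (fun s : ℝ => γ (τ s) - Real.log (τ' s)) t) •
          deriv (fun s : ℝ => X (τ s)) t +
        Real.exp (β (τ t) + 2 * Real.log (τ' t)) • gradient f (X (τ t)) = 0 := by
  intro t ht
  -- first derivative of Y = X ∘ τ on Ioi 0
  have hY : ∀ s ∈ Set.Ioi (0 : ℝ), HasDerivAt (fun s : ℝ => X (τ s)) (τ' s • X' (τ s)) s := by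
    intro s hs
    exact (hX (τ s) (hτpos s hs)).scomp s (hτ s hs)
  have ha : τ' t ≠ 0 := ne_of_gt (hτ'pos t ht)
  -- derivative of s ↦ τ' s • X' (τ s) at t
  have hY' : HasDerivAt (fun s : ℝ => τ' s • X' (τ s))
      (τ' t • (τ' t • X'' (τ t)) + τ'' t • X' (τ t)) t :=
    HasDerivAt.smul (hτ' t ht) ((hX' (τ t) (hτpos t ht)).scomp t (hτ t ht))
  -- deriv Y agrees with s ↦ τ' s • X' (τ s) near t
  have hmem : Set.Ioi (0 : ℝ) ∈ nhds t := isOpen_Ioi.mem_nhds ht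
  have heqd : deriv (fun s : ℝ => X (τ s)) =ᶠ[nhds t] fun s => τ' s • X' (τ s) :=
    Filter.eventually_of_mem hmem (fun s hs => (hY s hs).deriv)
  have hd2 : deriv (deriv (fun s : ℝ => X (τ s))) t
      = τ' t • (τ' t • X'' (τ t)) + τ'' t • X' (τ t) := by
    rw [Filter.EventuallyEq.deriv_eq heqd]
    exact hY'.deriv
  have hd1 : deriv (fun s : ℝ => X (τ s)) t = τ' t • X' (τ t) := (hY t ht).deriv
  -- derivative of the damping coefficient
  have hg : HasDerivAt (fun s : ℝ => γ (τ s) - Real.log (τ' s))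
      (γ' (τ t) * τ' t - τ'' t / τ' t) t := by
    have h1 : HasDerivAt (fun s : ℝ => γ (τ s)) (γ' (τ t) * τ' t) t :=
      (hγ (τ t) (hτpos t ht)).comp t (hτ t ht)
    have h2 : HasDerivAt (fun s : ℝ => Real.log (τ' s)) (τ'' t / τ' t) t :=
      (hτ' t ht).log ha
    exact h1.sub h2
  rw [hd1, hd2, hg.deriv]
  -- rewrite the exponential
  have hexp : Real.exp (β (τ t) + 2 * Real.log (τ' t))
      = Real.exp (β (τ t)) * (τ' t * τ' t) := by
    rw [Real.exp_add, two_mul, Real.exp_add, Real.exp_log (hτ'pos t ht)]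
  rw [hexp]
  -- use the Bregman flow equation at τ t
  have hB : X'' (τ t) = -(γ' (τ t) • X' (τ t) + Real.exp (β (τ t)) • gradient f (X (τ t))) := by
    have h := heq (τ t) (hτpos t ht)
    rw [add_assoc] at h
    exact eq_neg_of_add_eq_zero_left h
  rw [hB]
  have hba : τ'' t / τ' t * τ' t = τ'' t := div_mul_cancel₀ _ ha
  rw [smul_smul, smul_smul, sub_mul, hba]
  module
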